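/- Let r₊ = 1 + |{i ∈ I : s_i ≥ s₊}| and suppose s₊ ≥ 0. Then -log(1/log₂(1+r₊)) ≤ log(1 + exp(-s₊)) + Σ_{i∈I} log(1 + exp(s_i)); that is, -log NDCG(r₊) ≤ ℓ_BCE. -/

import Mathlib

/-! With `k` the number of negatives scored at least `s₊ ≥ 0`, each of them contributes at least
`log 2` to the loss and all other terms are nonnegative, so `ℓ_BCE ≥ k log 2`; on the other side
`log₂ (2 + k) ≤ k + 1 ≤ 2 ^ k`, i.e. `-log NDCG(r₊) = log (log₂ (2 + k)) ≤ k log 2`. -/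

open Real Finset

lemma log_logb_two_two_add_le (k : ℕ) : log (logb 2 (2 + k)) ≤ k * log 2 := by
  have hk : (2 : ℝ) + k ≤ 2 ^ (k + 1) := by
    have := Nat.lt_two_pow_self (n := k + 1)
    exact_mod_cast (show 2 + k ≤ 2 ^ (k + 1) by omega)
  have hlogb_le : logb 2 (2 + k) ≤ 2 ^ k :=
    calc logb 2 (2 + k) ≤ logb 2 (2 ^ (k + 1)) := logb_le_logb_of_le one_lt_two (by positivity) hk
      _ = k + 1 := by rw [logb_pow, logb_self_eq_one one_lt_two, mul_one]; push_cast; ring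
      _ ≤ 2 ^ k := by exact_mod_cast Nat.lt_two_pow_self
  have hlogb_pos : 0 < logb 2 (2 + k) := logb_pos one_lt_two (by linarith [k.cast_nonneg (α := ℝ)])
  calc log (logb 2 (2 + k)) ≤ log (2 ^ k) := log_le_log hlogb_pos hlogb_le
    _ = k * log 2 := log_pow 2 k

lemma log_one_add_exp_nonneg (x : ℝ) : 0 ≤ log (1 + exp x) :=
  log_nonneg (by linarith [exp_pos x])

lemma log_two_le_log_one_add_exp {x : ℝ} (hx : 0 ≤ x) : log 2 ≤ log (1 + exp x) :=
  log_le_log two_pos (by linarith [one_le_exp hx])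

lemma card_filter_le_mul_log_two_le_sum_log_one_add_exp {ι : Type*} (I : Finset ι) (s : ι → ℝ)
    {t : ℝ} (ht : 0 ≤ t) :
    #(I.filter (fun i => t ≤ s i)) * log 2 ≤ ∑ i ∈ I, log (1 + exp (s i)) :=
  calc #(I.filter (fun i => t ≤ s i)) * log 2 = ∑ i ∈ I.filter (fun i => t ≤ s i), log 2 := by
        rw [sum_const, nsmul_eq_mul]
    _ ≤ ∑ i ∈ I.filter (fun i => t ≤ s i), log (1 + exp (s i)) :=
        sum_le_sum fun i hi => log_two_le_log_one_add_exp (ht.trans (mem_filter.mp hi).2)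
    _ ≤ ∑ i ∈ I, log (1 + exp (s i)) :=
        sum_le_sum_of_subset_of_nonneg (filter_subset _ _)
          fun i _ _ => log_one_add_exp_nonneg (s i)

theorem stmt_6 {ι : Type*} (I : Finset ι) (s : ι → ℝ) (spos : ℝ) (hpos : 0 ≤ spos)
    (rpos : ℕ) (hr : rpos = 1 + (I.filter (fun i => spos ≤ s i)).card) :
    -Real.log (1 / Real.logb 2 (1 + (rpos : ℝ))) ≤
      Real.log (1 + Real.exp (-spos)) + ∑ i ∈ I, Real.log (1 + Real.exp (s i)) := by
  have hlhs : 1 + (rpos : ℝ) = 2 + #(I.filter (fun i => spos ≤ s i)) := by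
    rw [hr]; push_cast; ring
  rw [one_div, log_inv, neg_neg, hlhs]
  linarith [log_logb_two_two_add_le #(I.filter (fun i => spos ≤ s i)),
    card_filter_le_mul_log_two_le_sum_log_one_add_exp I s hpos, log_one_add_exp_nonneg (-spos)]
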